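/- Consider a one-dimensional wireless network with exactly three distinct stations at positions x₁, x₂, x₃ ∈ ℝ, powers P₁, P₂, P₃ > 0, no background noise (N = 0), threshold β ≥ 1 and path-loss exponent 2. Let [a,b] ⊆ ℝ be a closed interval containing none of the three stations, and suppose both endpoints a and b lie in the reception zone H₁ of station s₁ (i.e. SINR(s₁,a) ≥ β and SINR(s₁,b) ≥ β). Then the entire interval [a,b] is contained in H₁. -/

import Mathlib

private lemma convex_aux_pos (p q μ : ℝ) (hμ0 : 0 ≤ μ) (hμ1 : μ ≤ 1)
    (hp : 0 < p) (hq : 0 < q) :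
    1 / (μ * p + (1 - μ) * q) ^ 2 ≤ μ / p ^ 2 + (1 - μ) / q ^ 2 := by
  have hr : 0 < μ * p + (1 - μ) * q := by
    rcases le_total p q with h | h
    · nlinarith [mul_nonneg (by linarith : (0:ℝ) ≤ 1 - μ) (by linarith : (0:ℝ) ≤ q - p)]
    · nlinarith [mul_nonneg hμ0 (by linarith : (0:ℝ) ≤ p - q)]
  rw [div_add_div _ _ (by positivity) (by positivity),
    div_le_div_iff₀ (by positivity) (by positivity)]
  nlinarith [sq_nonneg (p - q), mul_pos hp hq, mul_nonneg hμ0 (by linarith : (0:ℝ) ≤ 1 - μ),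
    sq_nonneg (μ*p - (1-μ)*q), mul_nonneg (mul_nonneg hμ0 (by linarith : (0:ℝ) ≤ 1 - μ)) (sq_nonneg (p - q)),
    sq_nonneg (μ*q - (1-μ)*p)]

private lemma convex_aux (p q μ : ℝ) (hμ0 : 0 ≤ μ) (hμ1 : μ ≤ 1)
    (h : (0 < p ∧ 0 < q) ∨ (p < 0 ∧ q < 0)) :
    1 / (μ * p + (1 - μ) * q) ^ 2 ≤ μ / p ^ 2 + (1 - μ) / q ^ 2 := by
  rcases h with ⟨hp, hq⟩ | ⟨hp, hq⟩
  · exact convex_aux_pos p q μ hμ0 hμ1 hp hq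
  · have h := convex_aux_pos (-p) (-q) μ hμ0 hμ1 (by linarith) (by linarith)
    rw [show μ * -p + (1 - μ) * -q = -(μ * p + (1 - μ) * q) by ring, neg_sq, neg_sq, neg_sq] at h
    exact h

private lemma sum_convex (A1 A2 P0 y1 y2 u v w μ : ℝ)
    (hA1 : 0 ≤ A1) (hA2 : 0 ≤ A2) (hμ0 : 0 ≤ μ) (hμ1 : μ ≤ 1)
    (hw : w = μ * u + (1 - μ) * v)
    (h1 : (0 < u - y1 ∧ 0 < v - y1) ∨ (u - y1 < 0 ∧ v - y1 < 0))
    (h2 : (0 < u - y2 ∧ 0 < v - y2) ∨ (u - y2 < 0 ∧ v - y2 < 0))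
    (hu : A1 / (u - y1) ^ 2 + A2 / (u - y2) ^ 2 ≤ P0)
    (hv : A1 / (v - y1) ^ 2 + A2 / (v - y2) ^ 2 ≤ P0) :
    A1 / (w - y1) ^ 2 + A2 / (w - y2) ^ 2 ≤ P0 := by
  have k1 : A1 / (w - y1) ^ 2 ≤ μ * (A1 / (u - y1) ^ 2) + (1 - μ) * (A1 / (v - y1) ^ 2) := by
    have h := convex_aux (u - y1) (v - y1) μ hμ0 hμ1 h1
    have hw1 : w - y1 = μ * (u - y1) + (1 - μ) * (v - y1) := by rw [hw]; ring
    calc A1 / (w - y1) ^ 2 = A1 * (1 / (μ * (u - y1) + (1 - μ) * (v - y1)) ^ 2) := by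
          rw [hw1]; ring
      _ ≤ A1 * (μ / (u - y1) ^ 2 + (1 - μ) / (v - y1) ^ 2) := mul_le_mul_of_nonneg_left h hA1
      _ = μ * (A1 / (u - y1) ^ 2) + (1 - μ) * (A1 / (v - y1) ^ 2) := by ring
  have k2 : A2 / (w - y2) ^ 2 ≤ μ * (A2 / (u - y2) ^ 2) + (1 - μ) * (A2 / (v - y2) ^ 2) := by
    have h := convex_aux (u - y2) (v - y2) μ hμ0 hμ1 h2
    have hw2 : w - y2 = μ * (u - y2) + (1 - μ) * (v - y2) := by rw [hw]; ring
    calc A2 / (w - y2) ^ 2 = A2 * (1 / (μ * (u - y2) + (1 - μ) * (v - y2)) ^ 2) := by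
          rw [hw2]; ring
      _ ≤ A2 * (μ / (u - y2) ^ 2 + (1 - μ) / (v - y2) ^ 2) := mul_le_mul_of_nonneg_left h hA2
      _ = μ * (A2 / (u - y2) ^ 2) + (1 - μ) * (A2 / (v - y2) ^ 2) := by ring
  have hbu := mul_le_mul_of_nonneg_left hu hμ0
  have hbv := mul_le_mul_of_nonneg_left hv (by linarith : (0:ℝ) ≤ 1 - μ)
  nlinarith [k1, k2, hbu, hbv]
open Finset

noncomputable def sinr1 {n : ℕ} (x P : Fin n → ℝ) (N : ℝ) (i : Fin n) (t : ℝ) : ℝ :=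
  (P i / (t - x i) ^ 2) /
    ((∑ j ∈ Finset.univ.erase i, P j / (t - x j) ^ 2) + N)

noncomputable def recZone1 {n : ℕ} (x P : Fin n → ℝ) (N β : ℝ) (i : Fin n) : Set ℝ :=
  {t | (∀ j, t ≠ x j) ∧ β ≤ sinr1 x P N i t} ∪ {x i}

set_option maxHeartbeats 1600000 in
theorem no_free_hole_three_stations (x : Fin 3 → ℝ) (hx : Function.Injective x)
    (P : Fin 3 → ℝ) (hP : ∀ j, 0 < P j)
    (β : ℝ) (hβ : 1 ≤ β)
    (a b : ℝ) (hab : a ≤ b) (hfree : ∀ j, x j ∉ Set.Icc a b)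
    (ha : a ∈ recZone1 x P 0 β 0) (hb : b ∈ recZone1 x P 0 β 0) :
    Set.Icc a b ⊆ recZone1 x P 0 β 0 := by
  have hside : ∀ j, x j < a ∨ b < x j := by
    intro j
    have h := hfree j
    rw [Set.mem_Icc] at h
    push_neg at h
    rcases lt_or_ge (x j) a with h' | h'
    · exact Or.inl h'
    · exact Or.inr (h h')
  have hne : ∀ s, a ≤ s → s ≤ b → ∀ j, s ≠ x j := by
    intro s h1 h2 j e
    rcases hside j with h | h <;> rw [e] at h1 h2 <;> linarith
  have hx10 : x 1 - x 0 ≠ 0 := sub_ne_zero.mpr (hx.ne (by decide))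
  have hx20 : x 2 - x 0 ≠ 0 := sub_ne_zero.mpr (hx.ne (by decide))
  have hsa : β ≤ sinr1 x P 0 0 a := by
    rcases ha with h | h
    · exact h.2
    · exfalso
      rw [Set.mem_singleton_iff] at h
      rcases hside 0 with h0 | h0 <;> rw [← h] at h0 <;> linarith
  have hsb : β ≤ sinr1 x P 0 0 b := by
    rcases hb with h | h
    · exact h.2
    · exfalso
      rw [Set.mem_singleton_iff] at h
      rcases hside 0 with h0 | h0 <;> rw [← h] at h0 <;> linarith
  have hsum : ∀ s : ℝ, (∑ j ∈ Finset.univ.erase (0 : Fin 3), P j / (s - x j) ^ 2)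
      = P 1 / (s - x 1) ^ 2 + P 2 / (s - x 2) ^ 2 := by
    intro s
    rw [show (Finset.univ.erase (0 : Fin 3)) = {1, 2} from by decide,
      Finset.sum_insert (by decide), Finset.sum_singleton]
  have hequiv : ∀ s : ℝ, (∀ j, s ≠ x j) →
      ((β ≤ sinr1 x P 0 0 s) ↔
        (β * P 1 / (x 1 - x 0) ^ 2) / (1 / (s - x 0) - 1 / (x 1 - x 0)) ^ 2
          + (β * P 2 / (x 2 - x 0) ^ 2) / (1 / (s - x 0) - 1 / (x 2 - x 0)) ^ 2 ≤ P 0) := by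
    intro s hs
    have h0 : s - x 0 ≠ 0 := sub_ne_zero.mpr (hs 0)
    have h1 : s - x 1 ≠ 0 := sub_ne_zero.mpr (hs 1)
    have h2 : s - x 2 ≠ 0 := sub_ne_zero.mpr (hs 2)
    have hq0 : (0:ℝ) < (s - x 0) ^ 2 := by positivity
    have hq1 : (0:ℝ) < (s - x 1) ^ 2 := by positivity
    have hq2 : (0:ℝ) < (s - x 2) ^ 2 := by positivity
    have hD : 0 < P 1 / (s - x 1) ^ 2 + P 2 / (s - x 2) ^ 2 + 0 := by
      have i1 := div_pos (hP 1) hq1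
      have i2 := div_pos (hP 2) hq2
      linarith
    have hid : (β * P 1 / (x 1 - x 0) ^ 2) / (1 / (s - x 0) - 1 / (x 1 - x 0)) ^ 2
        + (β * P 2 / (x 2 - x 0) ^ 2) / (1 / (s - x 0) - 1 / (x 2 - x 0)) ^ 2
        = β * (P 1 / (s - x 1) ^ 2 + P 2 / (s - x 2) ^ 2 + 0) * (s - x 0) ^ 2 := by
      have e1 : 1 / (s - x 0) - 1 / (x 1 - x 0) = (x 1 - s) / ((s - x 0) * (x 1 - x 0)) := by
        field_simp
        ring
      have e2 : 1 / (s - x 0) - 1 / (x 2 - x 0) = (x 2 - s) / ((s - x 0) * (x 2 - x 0)) := by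
        field_simp
        ring
      have n1 : x 1 - s ≠ 0 := sub_ne_zero.mpr (Ne.symm (hs 1))
      have n2 : x 2 - s ≠ 0 := sub_ne_zero.mpr (Ne.symm (hs 2))
      rw [e1, e2, div_pow, div_pow]
      field_simp
      ring
    unfold sinr1
    rw [hsum s, le_div_iff₀ hD, le_div_iff₀ hq0, hid]
  rcases eq_or_lt_of_le hab with rfl | hlt
  · intro t ht
    rw [Set.mem_Icc] at ht
    have : t = a := le_antisymm ht.2 ht.1
    rw [this]; exact ha
  intro t ht
  rw [Set.mem_Icc] at ht
  obtain ⟨hta, htb⟩ := ht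
  have htne : ∀ j, t ≠ x j := hne t hta htb
  have hane : ∀ j, a ≠ x j := hne a le_rfl hab
  have hbne : ∀ j, b ≠ x j := hne b hab le_rfl
  left
  refine ⟨htne, ?_⟩
  rw [hequiv t htne]
  have hQa := (hequiv a hane).mp hsa
  have hQb := (hequiv b hbne).mp hsb
  have ha0 : a - x 0 ≠ 0 := sub_ne_zero.mpr (hane 0)
  have hb0 : b - x 0 ≠ 0 := sub_ne_zero.mpr (hbne 0)
  have ht0 : t - x 0 ≠ 0 := sub_ne_zero.mpr (htne 0)
  have horder : 1 / (b - x 0) ≤ 1 / (t - x 0) ∧ 1 / (t - x 0) ≤ 1 / (a - x 0) := by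
    rcases hside 0 with h0 | h0
    · exact ⟨one_div_le_one_div_of_le (by linarith) (by linarith),
        one_div_le_one_div_of_le (by linarith) (by linarith)⟩
    · exact ⟨one_div_le_one_div_of_neg_of_le (by linarith) (by linarith),
        one_div_le_one_div_of_neg_of_le (by linarith) (by linarith)⟩
  have huv : 1 / (b - x 0) < 1 / (a - x 0) := by
    rcases hside 0 with h0 | h0
    · exact one_div_lt_one_div_of_lt (by linarith) (by linarith)
    · exact one_div_lt_one_div_of_neg_of_lt (by linarith) (by linarith)
  have houtside : ∀ j : Fin 3, x j - x 0 ≠ 0 →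
      (0 < 1 / (b - x 0) - 1 / (x j - x 0) ∧ 0 < 1 / (a - x 0) - 1 / (x j - x 0)) ∨
      (1 / (b - x 0) - 1 / (x j - x 0) < 0 ∧ 1 / (a - x 0) - 1 / (x j - x 0) < 0) := by
    intro j hj0
    rcases lt_trichotomy (1 / (x j - x 0)) (1 / (b - x 0)) with hlo | heq | hhi
    · left; constructor <;> linarith
    · exfalso
      have hjb : x j - x 0 = b - x 0 := by
        rw [one_div, one_div] at heq
        exact inv_injective heq
      rcases hside j with h | h <;> linarith [hjb]
    · rcases lt_trichotomy (1 / (a - x 0)) (1 / (x j - x 0)) with hhi2 | heq2 | hlo2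
      · right; constructor <;> linarith
      · exfalso
        have hja : x j - x 0 = a - x 0 := by
          rw [one_div, one_div] at heq2
          exact (inv_injective heq2).symm
        rcases hside j with h | h <;> linarith [hja]
      · exfalso
        rcases hside 0 with h0 | h0
        · have hbp : 0 < b - x 0 := by linarith
          have hap : 0 < a - x 0 := by linarith
          have hjp : 0 < x j - x 0 := one_div_pos.mp (lt_trans (one_div_pos.mpr hbp) hhi)
          have e1 : 1 * (a - x 0) < 1 * (x j - x 0) := (div_lt_div_iff₀ hjp hap).mp hlo2
          have e2 : 1 * (x j - x 0) < 1 * (b - x 0) := (div_lt_div_iff₀ hbp hjp).mp hhi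
          rcases hside j with h | h <;> linarith
        · have hbn : b - x 0 < 0 := by linarith
          have han : a - x 0 < 0 := by linarith
          have hjn : x j - x 0 < 0 := one_div_neg.mp (lt_trans hlo2 (one_div_neg.mpr han))
          have e1 : a - x 0 < x j - x 0 := (one_div_lt_one_div_of_neg hjn han).mp hlo2
          have e2 : x j - x 0 < b - x 0 := (one_div_lt_one_div_of_neg hbn hjn).mp hhi
          rcases hside j with h | h <;> linarith
  have hμden : (0:ℝ) < 1 / (a - x 0) - 1 / (b - x 0) := by linarith
  set u := 1 / (b - x 0) with hu
  set v := 1 / (a - x 0) with hv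
  set w := 1 / (t - x 0) with hwdef
  set μ := (v - w) / (v - u) with hμ
  have hμ0 : 0 ≤ μ := div_nonneg (by linarith [horder.2]) (by linarith)
  have hμ1 : μ ≤ 1 := by
    rw [div_le_one (by linarith : 0 < v - u)]
    linarith [horder.1]
  have hw : w = μ * u + (1 - μ) * v := by
    rw [hμ]; field_simp
    ring
  exact sum_convex (β * P 1 / (x 1 - x 0) ^ 2) (β * P 2 / (x 2 - x 0) ^ 2) (P 0)
    (1 / (x 1 - x 0)) (1 / (x 2 - x 0)) u v w μ
    (div_nonneg (mul_nonneg (by linarith : (0:ℝ) ≤ β) (hP 1).le) (sq_nonneg _))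
    (div_nonneg (mul_nonneg (by linarith : (0:ℝ) ≤ β) (hP 2).le) (sq_nonneg _)) hμ0 hμ1 hw
    (houtside 1 hx10) (houtside 2 hx20) hQb hQa
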